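/- Let μX < μY be real numbers, σ > 0, and a < b real numbers. Let p_{X|a<X<b} and p_{Y|a<Y<b} denote the densities of N(μX, σ²) and N(μY, σ²) truncated to (a, b), and let λ ∈ (a, b) be the unique point with p_{X|a<X<b}(λ) = p_{Y|a<Y<b}(λ). Then p_{X|a<X<b}(x) > p_{Y|a<Y<b}(x) for all x with a < x < λ, and p_{X|a<X<b}(x) < p_{Y|a<Y<b}(x) for all x with λ < x < b. -/

import Mathlib

open MeasureTheory

/-- The standard normal density `φ(x) = exp(−x²/2)/√(2π)`. -/
noncomputable def stdNormalPDF (x : ℝ) : ℝ :=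
  Real.exp (-x ^ 2 / 2) / Real.sqrt (2 * Real.pi)

/-- The standard normal cumulative distribution function `Φ(x) = ∫_{−∞}^{x} φ(t) dt`. -/
noncomputable def stdNormalCDF (x : ℝ) : ℝ :=
  ∫ t in Set.Iic x, stdNormalPDF t

/-- The density of `N(μ, σ²)` truncated to the interval `(a, b)`:
`p(x) = (1/σ)·φ((x−μ)/σ) / (Φ((b−μ)/σ) − Φ((a−μ)/σ))` for `a ≤ x ≤ b`, `0` otherwise. -/
noncomputable def truncNormalPDF (μ σ a b x : ℝ) : ℝ :=
  if a ≤ x ∧ x ≤ b then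
    (1 / σ) * stdNormalPDF ((x - μ) / σ) /
      (stdNormalCDF ((b - μ) / σ) - stdNormalCDF ((a - μ) / σ))
  else 0

lemma sqrt2pi_pos : 0 < Real.sqrt (2 * Real.pi) :=
  Real.sqrt_pos.2 (by positivity)

lemma stdNormalPDF_pos (x : ℝ) : 0 < stdNormalPDF x :=
  div_pos (Real.exp_pos _) sqrt2pi_pos

lemma stdNormalPDF_integrable : Integrable stdNormalPDF := by
  have h : Integrable (fun x : ℝ => Real.exp (-(1/2 : ℝ) * x ^ 2)) :=
    integrable_exp_neg_mul_sq (by norm_num)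
  have heq : stdNormalPDF = fun x => Real.exp (-(1/2 : ℝ) * x ^ 2) / Real.sqrt (2 * Real.pi) := by
    funext x; unfold stdNormalPDF; ring_nf
  rw [heq]; exact h.div_const _

lemma stdNormalCDF_strictMono : StrictMono stdNormalCDF := by
  intro x y hxy
  have hint : ∀ z : ℝ, IntegrableOn stdNormalPDF (Set.Iic z) :=
    fun z => stdNormalPDF_integrable.integrableOn
  have h := intervalIntegral.integral_Iic_sub_Iic (hint x) (hint y)
  have hpos : 0 < ∫ t in x..y, stdNormalPDF t :=
    intervalIntegral.intervalIntegral_pos_of_pos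
      (stdNormalPDF_integrable.intervalIntegrable) stdNormalPDF_pos hxy
  have : (0:ℝ) < stdNormalCDF y - stdNormalCDF x := by
    rw [stdNormalCDF, stdNormalCDF, h]; exact hpos
  linarith

lemma pdf_mul_lt {s t s' t' : ℝ} (h : s' ^ 2 + t' ^ 2 < s ^ 2 + t ^ 2) :
    stdNormalPDF s * stdNormalPDF t < stdNormalPDF s' * stdNormalPDF t' := by
  unfold stdNormalPDF
  rw [div_mul_div_comm, div_mul_div_comm, div_lt_div_iff₀ (by positivity) (by positivity),
    ← Real.exp_add, ← Real.exp_add]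
  exact mul_lt_mul_of_pos_right
    (Real.exp_lt_exp.2 (show -s ^ 2 / 2 + -t ^ 2 / 2 < -s' ^ 2 / 2 + -t' ^ 2 / 2 by linarith))
    (mul_pos sqrt2pi_pos sqrt2pi_pos)

lemma helper {μX μY σ lam x : ℝ} (hσ : 0 < σ)
    {dX dY : ℝ} (hdX : 0 < dX) (hdY : 0 < dY)
    (key : stdNormalPDF ((lam - μX) / σ) * dY = stdNormalPDF ((lam - μY) / σ) * dX)
    (hpos : 0 < (lam - x) * (μY - μX)) :
    (1 / σ) * stdNormalPDF ((x - μY) / σ) / dY < (1 / σ) * stdNormalPDF ((x - μX) / σ) / dX := by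
  set qX := stdNormalPDF ((x - μX) / σ) with hqX
  set qY := stdNormalPDF ((x - μY) / σ) with hqY
  set pX := stdNormalPDF ((lam - μX) / σ) with hpXd
  set pY := stdNormalPDF ((lam - μY) / σ) with hpYd
  have hpX : 0 < pX := stdNormalPDF_pos _
  have hσ2 : 0 < σ ^ 2 := by positivity
  have hcross : qY * pX < qX * pY := by
    rw [hqX, hqY, hpXd, hpYd]
    apply pdf_mul_lt
    rw [div_pow, div_pow, div_pow, div_pow, ← add_div, ← add_div,
      div_lt_div_iff₀ hσ2 hσ2]
    nlinarith
  rw [div_lt_div_iff₀ hdY hdX]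
  have h5 : (0:ℝ) < 1 / σ := by positivity
  have hmain : qY * dX < qX * dY := by
    have h2 : qY * pX * dX < qX * pY * dX := mul_lt_mul_of_pos_right hcross hdX
    have h3 : qX * pY * dX = qX * dY * pX := by rw [mul_assoc, ← key]; ring
    have h4 : qY * dX * pX < qX * dY * pX := by linarith
    exact lt_of_mul_lt_mul_right h4 hpX.le
  have := mul_lt_mul_of_pos_left hmain h5
  linarith

/-- For `μX < μY`, `σ > 0` and `a < b`, if `λ ∈ (a, b)` is the intersection point of the
two truncated densities, then the density with smaller mean is strictly larger on
`(a, λ)` and strictly smaller on `(λ, b)`. -/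
theorem truncNormalPDF_gt_lt_of_eq
    (μX μY σ a b lam : ℝ) (hμ : μX < μY) (hσ : 0 < σ) (hab : a < b)
    (hlam : lam ∈ Set.Ioo a b)
    (heq : truncNormalPDF μX σ a b lam = truncNormalPDF μY σ a b lam) :
    (∀ x, a < x → x < lam → truncNormalPDF μX σ a b x > truncNormalPDF μY σ a b x) ∧
      (∀ x, lam < x → x < b → truncNormalPDF μX σ a b x < truncNormalPDF μY σ a b x) := by
  obtain ⟨hal, hlb⟩ := hlam
  set dX := stdNormalCDF ((b - μX) / σ) - stdNormalCDF ((a - μX) / σ) with hdXdef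
  set dY := stdNormalCDF ((b - μY) / σ) - stdNormalCDF ((a - μY) / σ) with hdYdef
  have hdX : 0 < dX := sub_pos.2 (stdNormalCDF_strictMono (by gcongr))
  have hdY : 0 < dY := sub_pos.2 (stdNormalCDF_strictMono (by gcongr))
  have hlcond : a ≤ lam ∧ lam ≤ b := ⟨hal.le, hlb.le⟩
  rw [truncNormalPDF, truncNormalPDF, if_pos hlcond, if_pos hlcond, ← hdXdef, ← hdYdef] at heq
  have hpX := stdNormalPDF_pos ((lam - μX) / σ)
  have hpY := stdNormalPDF_pos ((lam - μY) / σ)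
  have key : stdNormalPDF ((lam - μX) / σ) * dY = stdNormalPDF ((lam - μY) / σ) * dX := by
    field_simp at heq
    linear_combination heq
  constructor
  · intro x hax hxl
    rw [gt_iff_lt, truncNormalPDF, truncNormalPDF, if_pos ⟨hax.le, (hxl.trans hlb).le⟩,
      if_pos ⟨hax.le, (hxl.trans hlb).le⟩, ← hdXdef, ← hdYdef]
    exact helper hσ hdX hdY key (by nlinarith)
  · intro x hlx hxb
    rw [truncNormalPDF, truncNormalPDF, if_pos ⟨(hal.trans hlx).le, hxb.le⟩,
      if_pos ⟨(hal.trans hlx).le, hxb.le⟩, ← hdXdef, ← hdYdef]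
    exact helper hσ hdY hdX key.symm (by nlinarith)
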